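/- At the threshold value p = 1/2, the performance measures of the complete graph and the star graph on n ≥ 2 vertices coincide: μ(K_n) = μ(S_n) = (n−1)/(2n). -/

import Mathlib

open SimpleGraph Finset
open scoped Classical

/-- Total distance: sum of geodesic distances over all ordered pairs of vertices. -/
noncomputable def totalDist {n : ℕ} (g : SimpleGraph (Fin n)) : ℕ :=
  ∑ i : Fin n, ∑ j : Fin n, g.dist i j

/-- Information measure K(g) = n(n-1)/T(g). -/
noncomputable def infoMeasure {n : ℕ} (g : SimpleGraph (Fin n)) : ℝ :=
  ((n : ℝ) * ((n : ℝ) - 1)) / (totalDist g : ℝ)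

/-- Secrecy measure H(g) = (1/n) Σ_i u_i with u_i = 1 - (p d_i + 1)/n. -/
noncomputable def secrecy {n : ℕ} (g : SimpleGraph (Fin n)) (p : ℝ) : ℝ :=
  (1 / (n : ℝ)) * ∑ i : Fin n, (1 - (p * (g.degree i : ℝ) + 1) / (n : ℝ))

/-- Performance measure μ(g) = H(g) · K(g). -/
noncomputable def perf {n : ℕ} (g : SimpleGraph (Fin n)) (p : ℝ) : ℝ :=
  secrecy g p * infoMeasure g

/-- Star graph on `Fin n`: vertex 0 adjacent to all others, no other edges. -/
def starGraph (n : ℕ) : SimpleGraph (Fin n) where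
  Adj i j := i ≠ j ∧ ((i : ℕ) = 0 ∨ (j : ℕ) = 0)
  symm := ⟨fun i j h => ⟨h.1.symm, h.2.symm⟩⟩
  loopless := ⟨fun i h => h.1 rfl⟩


/-!
Write `D = ∑ᵢ dᵢ`. For every graph, `H(g) = (n(n-1) - p D) / n²`. If the diameter is at most
two, a pair of distinct vertices is at distance `2 - [adjacent]`, so `T(g) = 2n(n-1) - D`; at
`p = 1/2` the factor `n(n-1) - D/2` then cancels between `H` and `K`, leaving `μ(g) = (n-1)/(2n)`
for every graph of diameter at most two, in particular for `K_n` and for `S_n`.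
-/

namespace SimpleGraph

variable {V : Type*} {G : SimpleGraph V}

lemma dist_add_ite_adj_of_ediam_le_two [DecidableEq V] (h : G.ediam ≤ 2) (u v : V) :
    G.dist u v + (if G.Adj u v then 1 else 0) = if u = v then 0 else 2 := by
  have hreach : G.Reachable u v :=
    reachable_of_edist_ne_top (ne_top_of_le_ne_top (by decide) (edist_le_ediam.trans h))
  by_cases huv : u = v
  · subst huv
    simp
  by_cases hadj : G.Adj u v
  · simp [huv, hadj, dist_eq_one_iff_adj.2 hadj]
  · have hle : G.dist u v ≤ 2 := by
      exact_mod_cast hreach.coe_dist_eq_edist ▸ edist_le_ediam.trans h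
    have hgt := hreach.one_lt_dist_of_ne_of_not_adj huv hadj
    simp only [huv, hadj, if_false]
    omega

lemma ediam_le_two_of_forall_adj [Nontrivial V] {c : V} (hc : ∀ v, c ≠ v → G.Adj c v) :
    G.ediam ≤ 2 :=
  calc G.ediam ≤ 2 * G.eccent c := ediam_le_two_mul_eccent c
    _ ≤ 2 * 1 := by gcongr; exact (eccent_le_one_iff c).2 hc
    _ = 2 := mul_one 2

end SimpleGraph

variable {n : ℕ}

lemma secrecy_eq_sum_degree (g : SimpleGraph (Fin n)) (p : ℝ) :
    secrecy g p = ((n : ℝ) * (n - 1) - p * ∑ i, (g.degree i : ℝ)) / (n : ℝ) ^ 2 := by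
  unfold secrecy
  rw [sum_sub_distrib, ← sum_div, sum_add_distrib, ← mul_sum]
  rcases eq_or_ne (n : ℝ) 0 with hn | hn
  · simp [hn]
  · simp only [sum_const, card_univ, Fintype.card_fin, nsmul_eq_mul, mul_one]
    field_simp
    ring

lemma totalDist_add_sum_degree {g : SimpleGraph (Fin n)} (h : g.ediam ≤ 2) :
    totalDist g + ∑ i, g.degree i = 2 * (n * (n - 1)) := by
  have hrow (i : Fin n) : ∑ j, (if g.Adj i j then (1 : ℕ) else 0) = g.degree i := by
    rw [sum_boole, Nat.cast_id, ← neighborFinset_eq_filter, card_neighborFinset_eq_degree]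
  calc totalDist g + ∑ i, g.degree i
      = ∑ i, ∑ j, (g.dist i j + if g.Adj i j then 1 else 0) := by
        simp only [totalDist, sum_add_distrib, hrow]
    _ = ∑ i : Fin n, ∑ j : Fin n, if i = j then 0 else 2 := by
        simp only [dist_add_ite_adj_of_ediam_le_two h]
    _ = 2 * (n * (n - 1)) := by
        simp only [sum_ite, sum_const_zero, filter_ne, sum_const, mem_univ, card_erase_of_mem,
          card_univ, Fintype.card_fin, smul_eq_mul, zero_add]
        ring

lemma sum_degree_le (g : SimpleGraph (Fin n)) : ∑ i, g.degree i ≤ n * (n - 1) := by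
  simpa using sum_le_card_nsmul univ (fun i => g.degree i) (n - 1)
    (fun i _ => Nat.le_sub_one_of_lt (by simpa using g.degree_lt_card_verts i))

theorem perf_half_of_ediam_le_two {g : SimpleGraph (Fin n)} (hn : 2 ≤ n) (h : g.ediam ≤ 2) :
    perf g (1 / 2) = ((n : ℝ) - 1) / (2 * (n : ℝ)) := by
  have hT : (totalDist g : ℝ) = 2 * (n * (n - 1)) - ∑ i, (g.degree i : ℝ) := by
    have := congrArg (Nat.cast : ℕ → ℝ) (totalDist_add_sum_degree h)
    push_cast [Nat.cast_sub (by omega : 1 ≤ n)] at this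
    linarith
  have hD : (∑ i, (g.degree i : ℝ)) ≤ n * (n - 1) := by
    have := Nat.cast_le (α := ℝ) |>.2 (sum_degree_le g)
    push_cast [Nat.cast_sub (by omega : 1 ≤ n)] at this
    exact this
  have hn' : (2 : ℝ) ≤ n := by exact_mod_cast hn
  have hT0 : 2 * (n * (n - 1)) - ∑ i, (g.degree i : ℝ) ≠ 0 := by nlinarith
  have hn0 : (n : ℝ) ≠ 0 := Nat.cast_ne_zero.2 (by omega)
  rw [perf, infoMeasure, secrecy_eq_sum_degree, hT, div_mul_div_comm,
    div_eq_div_iff (mul_ne_zero (pow_ne_zero 2 hn0) hT0) (mul_ne_zero two_ne_zero hn0)]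
  ring

/-- at p = 1/2, μ(K_n) = μ(S_n) = (n-1)/(2n) for n ≥ 2. -/
theorem perf_threshold {n : ℕ} (hn : 2 ≤ n) :
    perf (⊤ : SimpleGraph (Fin n)) (1 / 2) = ((n : ℝ) - 1) / (2 * (n : ℝ)) ∧
      perf (starGraph n) (1 / 2) = ((n : ℝ) - 1) / (2 * (n : ℝ)) := by
  have : Nontrivial (Fin n) := Fin.nontrivial_iff_two_le.2 hn
  refine ⟨perf_half_of_ediam_le_two hn (by simp), perf_half_of_ediam_le_two hn ?_⟩
  exact ediam_le_two_of_forall_adj (c := ⟨0, by omega⟩) fun v hv => ⟨hv, Or.inl rfl⟩
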